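/- Let u and v be two bounded, nonnegative, measurable functions on ℝ^n and suppose that v is symmetric, i.e. v(−y) = v(y) for all y. Then for every λ ∈ [0,1), ∫∫ ⟨x, y⟩ u(x) v(y) f_{2n}(x,y;λ) dx dy ≥ 0. -/

import Mathlib

open MeasureTheory Real

/-- The density `f_{2n}(x, y; λ)` of the correlated pair of standard Gaussians. -/
noncomputable def gaussPairDensity (n : ℕ) (l : ℝ)
    (x y : EuclideanSpace ℝ (Fin n)) : ℝ :=
  (2 * π) ^ (-(n : ℝ)) * (1 - l ^ 2) ^ (-(n : ℝ) / 2) *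
    Real.exp (-(‖x‖ ^ 2 + ‖y‖ ^ 2 - 2 * l * (inner ℝ x y : ℝ)) / (2 * (1 - l ^ 2)))

/-!
For fixed `x`, the integrand in `y` is `⟪x, y⟫ v(y) f(x, y)` up to the factor `u(x) ≥ 0`.
Pairing `y` with `-y` (which preserves Lebesgue measure and `v`) turns the inner integral into
`½ ∫ ⟪x, y⟫ v(y) (f(x, y) - f(x, -y)) dy`, and this integrand is nonnegative because, for
`λ ≥ 0`, the density `f(x, y)` is a nondecreasing function of `⟪x, y⟫` once `‖y‖` is fixed.
-/

theorem integral_nonneg_of_add_comp_neg_nonneg {G : Type*} [MeasurableSpace G] [AddGroup G]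
    [MeasurableNeg G] (μ : Measure G) [μ.IsNegInvariant] {h : G → ℝ}
    (hh : ∀ y, 0 ≤ h y + h (-y)) : 0 ≤ ∫ y, h y ∂μ := by
  by_cases hint : Integrable h μ
  · have hsum : 0 ≤ ∫ y, (h y + h (-y)) ∂μ := integral_nonneg hh
    rw [integral_add hint hint.comp_neg, integral_neg_eq_self h μ] at hsum
    linarith
  · rw [integral_undef hint]

section GaussPairDensity

variable {n : ℕ} {l : ℝ}

theorem gaussPairDensity_le_of_inner_le (hl0 : 0 ≤ l) (hl1 : l < 1)
    {x y y' : EuclideanSpace ℝ (Fin n)} (hnorm : ‖y'‖ = ‖y‖)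
    (hinner : (inner ℝ x y' : ℝ) ≤ inner ℝ x y) :
    gaussPairDensity n l x y' ≤ gaussPairDensity n l x y := by
  have hl2 : 0 < 1 - l ^ 2 := by nlinarith
  unfold gaussPairDensity
  rw [hnorm]
  gcongr

theorem inner_mul_gaussPairDensity_sub_neg_nonneg (hl0 : 0 ≤ l) (hl1 : l < 1)
    (x y : EuclideanSpace ℝ (Fin n)) :
    0 ≤ (inner ℝ x y : ℝ) * (gaussPairDensity n l x y - gaussPairDensity n l x (-y)) := by
  rcases le_total 0 (inner ℝ x y : ℝ) with hxy | hxy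
  · refine mul_nonneg hxy (sub_nonneg.2 ?_)
    exact gaussPairDensity_le_of_inner_le hl0 hl1 (norm_neg y) (by rw [inner_neg_right]; linarith)
  · refine mul_nonneg_of_nonpos_of_nonpos hxy (sub_nonpos.2 ?_)
    exact gaussPairDensity_le_of_inner_le hl0 hl1 (norm_neg y).symm
      (by rw [inner_neg_right]; linarith)

end GaussPairDensity

theorem inner_moment_nonneg_general (n : ℕ) (u v : EuclideanSpace ℝ (Fin n) → ℝ)
    (hu0 : ∀ x, 0 ≤ u x)
    (hv0 : ∀ x, 0 ≤ v x)
    (hvsymm : ∀ y, v (-y) = v y)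
    (l : ℝ) (hl0 : 0 ≤ l) (hl1 : l < 1) :
    0 ≤ ∫ x, ∫ y, (inner ℝ x y : ℝ) * u x * v y * gaussPairDensity n l x y := by
  refine integral_nonneg fun x => integral_nonneg_of_add_comp_neg_nonneg _ fun y => ?_
  have hpair : (inner ℝ x y : ℝ) * u x * v y * gaussPairDensity n l x y
      + (inner ℝ x (-y) : ℝ) * u x * v (-y) * gaussPairDensity n l x (-y)
      = u x * v y * ((inner ℝ x y : ℝ)
          * (gaussPairDensity n l x y - gaussPairDensity n l x (-y))) := by
    rw [inner_neg_right, hvsymm]; ring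
  rw [hpair]
  exact mul_nonneg (mul_nonneg (hu0 x) (hv0 y))
    (inner_mul_gaussPairDensity_sub_neg_nonneg hl0 hl1 x y)

/-- For bounded nonnegative measurable `u, v` on ℝⁿ with `v` symmetric, and every
`λ ∈ [0, 1)`, one has `∫∫ ⟨x,y⟩ u(x) v(y) f_{2n}(x,y;λ) dx dy ≥ 0`. -/
theorem inner_moment_nonneg (n : ℕ) (u v : EuclideanSpace ℝ (Fin n) → ℝ)
    (hum : Measurable u) (hub : ∃ M : ℝ, ∀ x, |u x| ≤ M) (hu0 : ∀ x, 0 ≤ u x)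
    (hvm : Measurable v) (hvb : ∃ M : ℝ, ∀ x, |v x| ≤ M) (hv0 : ∀ x, 0 ≤ v x)
    (hvsymm : ∀ y, v (-y) = v y)
    (l : ℝ) (hl0 : 0 ≤ l) (hl1 : l < 1) :
    0 ≤ ∫ x, ∫ y, (inner ℝ x y : ℝ) * u x * v y * gaussPairDensity n l x y :=
  inner_moment_nonneg_general n u v hu0 hv0 hvsymm l hl0 hl1
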